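/- arXiv:2205.13301 — 3 statements merged into one kernel-verified Lean document; each statement's English description precedes it below -/
import Mathlib

section
/- Let H be a Hilbert space, U and V Hilbert spaces, b : U × V → ℝ a bounded bilinear form with boundedness constant C and satisfying the inf-sup condition sup_{0≠v∈V} b(u,v)/‖v‖_V ≥ c‖u‖_U for all u ∈ U with c > 0, together with injectivity: for every nonzero v ∈ V there is u ∈ U with b(u,v) ≠ 0. Then for every bounded linear functional F on V there exists a unique u ∈ U with b(u,v) = F(v) for all v ∈ V, and ‖u‖_U ≤ c⁻¹ ‖F‖_{V'}. -/
open RealInnerProductSpace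

/-- Babuška–Nečas theorem: a bounded bilinear form on Hilbert spaces satisfying
the inf-sup condition and injectivity on the test side yields a unique solution
for every bounded linear functional, with stability bound c⁻¹‖F‖. -/
theorem stmt_6
    {U V : Type*} [NormedAddCommGroup U] [InnerProductSpace ℝ U] [CompleteSpace U]
    [NormedAddCommGroup V] [InnerProductSpace ℝ V] [CompleteSpace V]
    (b : U →ₗ[ℝ] V →ₗ[ℝ] ℝ) (C c : ℝ) (hC : 0 < C) (hc : 0 < c)
    (hbound : ∀ (u : U) (v : V), |b u v| ≤ C * ‖u‖ * ‖v‖)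
    (hinfsup : ∀ u : U, c * ‖u‖ ≤ ⨆ v : {v : V // v ≠ 0}, b u (v : V) / ‖(v : V)‖)
    (hinj : ∀ v : V, v ≠ 0 → ∃ u : U, b u v ≠ 0)
    (F : V →L[ℝ] ℝ) :
    (∃! u : U, ∀ v : V, b u v = F v) ∧
      ∀ u : U, (∀ v : V, b u v = F v) → ‖u‖ ≤ c⁻¹ * ‖F‖ := by
  -- Bound the sup by M whenever b u v ≤ M‖v‖ for all nonzero v.
  have suple : ∀ (u : U) (M : ℝ), 0 ≤ M → (∀ v : V, v ≠ 0 → b u v ≤ M * ‖v‖) →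
      (⨆ v : {v : V // v ≠ 0}, b u (v : V) / ‖(v : V)‖) ≤ M := by
    intro u M hM h
    rcases isEmpty_or_nonempty {v : V // v ≠ 0} with hE | hNE
    · rw [iSup_of_empty', Real.sSup_empty]; exact hM
    · exact ciSup_le fun v => by
        rw [div_le_iff₀ (norm_pos_iff.mpr v.2)]
        exact h v v.2
  have hlowM : ∀ (u : U) (M : ℝ), 0 ≤ M → (∀ v : V, v ≠ 0 → b u v ≤ M * ‖v‖) →
      c * ‖u‖ ≤ M := fun u M hM h => le_trans (hinfsup u) (suple u M hM h)
  -- stability bound for any solution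
  have hstab : ∀ u : U, (∀ v : V, b u v = F v) → ‖u‖ ≤ c⁻¹ * ‖F‖ := by
    intro u hu
    have h1 : c * ‖u‖ ≤ ‖F‖ := by
      refine hlowM u ‖F‖ (norm_nonneg F) fun v _ => ?_
      rw [hu v]
      calc F v ≤ ‖F v‖ := le_abs_self _
        _ ≤ ‖F‖ * ‖v‖ := F.le_opNorm v
    rw [← mul_le_mul_iff_right₀ hc, ← mul_assoc, mul_inv_cancel₀ hc.ne', one_mul]
    exact h1
  -- if b u v = 0 for all v then u = 0
  have hker : ∀ u : U, (∀ v : V, b u v = 0) → u = 0 := by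
    intro u hu
    have h0 : c * ‖u‖ ≤ 0 := hlowM u 0 le_rfl fun v _ => by rw [hu v]; simp
    have : ‖u‖ = 0 := le_antisymm (by nlinarith) (norm_nonneg u)
    exact norm_eq_zero.mp this
  -- the continuous bilinear map
  have hbound' : ∀ (u : U) (v : V), ‖b u v‖ ≤ C * ‖u‖ * ‖v‖ := fun u v => by
    simpa [Real.norm_eq_abs] using hbound u v
  set B : U →L[ℝ] V →L[ℝ] ℝ := LinearMap.mkContinuous₂ b C hbound' with hB
  have hBapp : ∀ (u : U) (v : V), B u v = b u v := fun u v => rfl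
  set T := (InnerProductSpace.toDual ℝ V).symm with hTdef
  have hT : ∀ (f : V →L[ℝ] ℝ) (v : V), ⟪T f, v⟫ = f v := fun f v =>
    InnerProductSpace.toDual_symm_apply
  -- the linear operator A : U → V with ⟪A u, v⟫ = b u v
  set A : U →ₗ[ℝ] V :=
    { toFun := fun u => T (B u)
      map_add' := fun x y => by simp [map_add]
      map_smul' := fun r x => by
        simp [map_smulₛₗ, starRingEnd_apply, star_trivial] } with hAdef
  have hAb : ∀ (u : U) (v : V), ⟪A u, v⟫ = b u v := fun u v => hT (B u) v
  have hup : ∀ u : U, ‖A u‖ ≤ C * ‖u‖ := by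
    intro u
    have : ‖A u‖ = ‖B u‖ := T.norm_map (B u)
    rw [this]
    exact ContinuousLinearMap.opNorm_le_bound _ (mul_nonneg hC.le (norm_nonneg u))
      fun v => hbound' u v
  set Ac : U →L[ℝ] V := A.mkContinuous C hup with hAcdef
  have hAcA : ∀ u : U, Ac u = A u := fun u => rfl
  have hlow : ∀ u : U, c * ‖u‖ ≤ ‖Ac u‖ := by
    intro u
    refine hlowM u ‖Ac u‖ (norm_nonneg _) fun v _ => ?_
    rw [← hAb u v, ← hAcA u]
    exact real_inner_le_norm _ _
  -- antilipschitz, closed range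
  have hanti : AntilipschitzWith ⟨c⁻¹, inv_nonneg.mpr hc.le⟩ Ac := by
    refine ContinuousLinearMap.antilipschitz_of_bound Ac fun u => ?_
    have := hlow u
    push_cast
    change ‖u‖ ≤ c⁻¹ * ‖Ac u‖
    rw [← mul_le_mul_iff_right₀ hc, ← mul_assoc, mul_inv_cancel₀ hc.ne', one_mul]
    exact this
  have hclosed : IsClosed ((LinearMap.range (Ac : U →ₗ[ℝ] V) : Submodule ℝ V) : Set V) :=
    hanti.isClosed_range Ac.uniformContinuous
  set K : Submodule ℝ V := LinearMap.range (Ac : U →ₗ[ℝ] V) with hKdef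
  haveI : CompleteSpace K := hclosed.completeSpace_coe
  have horth : Kᗮ = ⊥ := by
    rw [Submodule.eq_bot_iff]
    intro v hv
    by_contra h0
    obtain ⟨u, hu⟩ := hinj v h0
    apply hu
    have h2 : ⟪Ac u, v⟫ = 0 := (Submodule.mem_orthogonal K v).mp hv (Ac u) ⟨u, rfl⟩
    rw [← hAb u v, ← hAcA u]
    exact h2
  have hKtop : K = ⊤ := by
    calc K = Kᗮᗮ := (Submodule.orthogonal_orthogonal K).symm
      _ = (⊥ : Submodule ℝ V)ᗮ := by rw [horth]
      _ = ⊤ := Submodule.bot_orthogonal_eq_top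
  -- existence
  obtain ⟨u₀, hu₀⟩ : T F ∈ K := hKtop ▸ Submodule.mem_top
  replace hu₀ : Ac u₀ = T F := hu₀
  have hsol : ∀ v : V, b u₀ v = F v := by
    intro v
    rw [← hAb u₀ v, ← hAcA u₀, hu₀, hT]
  refine ⟨⟨u₀, hsol, fun u hu => ?_⟩, hstab⟩
  have hdiff : u - u₀ = 0 := by
    refine hker (u - u₀) fun v => ?_
    simp [map_sub, hu v, hsol v]
  exact sub_eq_zero.mp hdiff
end

section
/- Let U, V be Hilbert spaces and B : U → V' a bounded linear operator such that c‖u‖_U ≤ ‖Bu‖_{V'} ≤ C‖u‖_U for all u ∈ U with constants 0 < c ≤ C. Let U_h ⊆ U be a closed subspace and let u ∈ U. If u_h ∈ U_h minimizes ‖B(w) - Bu‖_{V'} over w ∈ U_h, then ‖u - u_h‖_U ≤ (C/c) ‖u - w‖_U for every w ∈ U_h. -/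
theorem norm_sub_le_div_mul_of_residual_le {E F 𝓕 : Type*} [SeminormedAddCommGroup E]
    [SeminormedAddCommGroup F] [FunLike 𝓕 E F] [AddMonoidHomClass 𝓕 E F] (B : 𝓕) {c C : ℝ}
    (hc : 0 < c) (hlow : ∀ x, c * ‖x‖ ≤ ‖B x‖) (hup : ∀ x, ‖B x‖ ≤ C * ‖x‖) {u v w : E}
    (hres : ‖B v - B u‖ ≤ ‖B w - B u‖) :
    ‖u - v‖ ≤ C / c * ‖u - w‖ := by
  have key : c * ‖u - v‖ ≤ C * ‖u - w‖ :=
    calc c * ‖u - v‖ ≤ ‖B (u - v)‖ := hlow _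
      _ = ‖B v - B u‖ := by rw [map_sub, norm_sub_rev]
      _ ≤ ‖B w - B u‖ := hres
      _ = ‖B (u - w)‖ := by rw [map_sub, norm_sub_rev]
      _ ≤ C * ‖u - w‖ := hup _
  rw [div_mul_eq_mul_div, le_div_iff₀' hc]
  exact key

theorem stmt_7_general
    {U V : Type*} [NormedAddCommGroup U] [InnerProductSpace ℝ U]
    [NormedAddCommGroup V] [InnerProductSpace ℝ V]
    (B : U →L[ℝ] (V →L[ℝ] ℝ)) (c C : ℝ) (hc : 0 < c)
    (hlow : ∀ u : U, c * ‖u‖ ≤ ‖B u‖) (hup : ∀ u : U, ‖B u‖ ≤ C * ‖u‖)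
    (Uh : Submodule ℝ U)
    (u u_h : U)
    (hmin : ∀ w ∈ Uh, ‖B u_h - B u‖ ≤ ‖B w - B u‖) :
    ∀ w ∈ Uh, ‖u - u_h‖ ≤ (C / c) * ‖u - w‖ :=
  fun _ hw => norm_sub_le_div_mul_of_residual_le B hc hlow hup (hmin _ hw)

/-- Quasi-optimality of minimum-residual (DPG) methods: if B : U → V' satisfies
c‖u‖ ≤ ‖Bu‖ ≤ C‖u‖ and u_h minimizes the residual ‖Bw - Bu‖ over a closed
subspace U_h, then ‖u - u_h‖ ≤ (C/c)‖u - w‖ for all w ∈ U_h. -/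
theorem stmt_7
    {U V : Type*} [NormedAddCommGroup U] [InnerProductSpace ℝ U] [CompleteSpace U]
    [NormedAddCommGroup V] [InnerProductSpace ℝ V] [CompleteSpace V]
    (B : U →L[ℝ] (V →L[ℝ] ℝ)) (c C : ℝ) (hc : 0 < c) (hcC : c ≤ C)
    (hlow : ∀ u : U, c * ‖u‖ ≤ ‖B u‖) (hup : ∀ u : U, ‖B u‖ ≤ C * ‖u‖)
    (Uh : Submodule ℝ U) (hUh : IsClosed (Uh : Set U))
    (u u_h : U) (hmem : u_h ∈ Uh)
    (hmin : ∀ w ∈ Uh, ‖B u_h - B u‖ ≤ ‖B w - B u‖) :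
    ∀ w ∈ Uh, ‖u - u_h‖ ≤ (C / c) * ‖u - w‖ :=
  stmt_7_general B c C hc hlow hup Uh u u_h hmin
end

section
/- Let U, V be Hilbert spaces, b : U × V → ℝ a bounded bilinear form with ‖b‖ ≤ C satisfying the inf-sup condition with constant c > 0, let T : U → V be the trial-to-test operator defined by ⟨Tu, v⟩_V = b(u, v) for all v ∈ V, and U_h ⊆ U a finite-dimensional subspace. If u ∈ U satisfies b(u, v) = F(v) for all v ∈ V and u_h ∈ U_h satisfies b(u_h, T δu) = F(T δu) for all δu ∈ U_h, then u_h is the minimizer over U_h of w ↦ ‖B w - F‖_{V'} (where B : U → V' is induced by b), and ‖u - u_h‖_U ≤ (C/c) inf_{w∈U_h} ‖u - w‖_U. -/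
/-!
Since `T u = vF`, the residual `T w - vF` of any `w` equals `T (w - u)`. The discrete equations
say that the residual of `u_h` is orthogonal to `T(U_h)`, so by Pythagoras it is the shortest
residual over `U_h`. The inf-sup condition `c‖x‖ ≤ ‖T x‖` and the bound `‖T x‖ ≤ C‖x‖`, which
follows from `‖T x‖² = b(x, T x)`, turn this into quasi-optimality with constant `C / c`.
-/

open RealInnerProductSpace

section

variable {E F : Type*} [NormedAddCommGroup F] [InnerProductSpace ℝ F]

theorem norm_le_of_real_inner_self_le {x : F} {M : ℝ} (hM : 0 ≤ M) (h : ⟪x, x⟫ ≤ M * ‖x‖) :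
    ‖x‖ ≤ M := by
  rcases (norm_nonneg x).eq_or_lt with hx | hx
  · rw [← hx]
    exact hM
  · rw [real_inner_self_eq_norm_mul_norm] at h
    exact le_of_mul_le_mul_right h hx

theorem norm_le_norm_add_of_real_inner_eq_zero {x y : F} (h : ⟪x, y⟫ = 0) : ‖x‖ ≤ ‖x + y‖ := by
  rw [mul_self_le_mul_self_iff (norm_nonneg _) (norm_nonneg _),
    norm_add_sq_eq_norm_sq_add_norm_sq_real h]
  exact le_add_of_nonneg_right (mul_self_nonneg _)

theorem LinearMap.norm_sub_le_of_real_inner_sub_eq_zero [AddCommGroup E] [Module ℝ E]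
    (T : E →ₗ[ℝ] F) {K : Submodule ℝ E} {f : F} {x : E} (hx : x ∈ K)
    (horth : ∀ y ∈ K, ⟪T x - f, T y⟫ = 0) {w : E} (hw : w ∈ K) :
    ‖T x - f‖ ≤ ‖T w - f‖ := by
  have hsplit : T w - f = (T x - f) + T (w - x) := by
    rw [map_sub]
    abel
  rw [hsplit]
  exact norm_le_norm_add_of_real_inner_eq_zero (horth _ (K.sub_mem hw hx))

end

theorem stmt_17_general
    {U V : Type*} [NormedAddCommGroup U] [InnerProductSpace ℝ U]
    [NormedAddCommGroup V] [InnerProductSpace ℝ V]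
    (b : U →ₗ[ℝ] V →ₗ[ℝ] ℝ) (C c : ℝ) (hC : 0 < C) (hc : 0 < c)
    (hbound : ∀ (u : U) (v : V), |b u v| ≤ C * ‖u‖ * ‖v‖)
    (T : U →ₗ[ℝ] V) (hT : ∀ (u : U) (v : V), ⟪T u, v⟫ = b u v)
    (hinfsup : ∀ u : U, c * ‖u‖ ≤ ‖T u‖)
    (Uh : Submodule ℝ U)
    (vF : V) (u : U) (hu : ∀ v : V, b u v = ⟪vF, v⟫)
    (u_h : U) (hmem : u_h ∈ Uh)
    (hdisc : ∀ δu ∈ Uh, b u_h (T δu) = ⟪vF, T δu⟫) :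
    (∀ w ∈ Uh, ‖T u_h - vF‖ ≤ ‖T w - vF‖) ∧
      ∀ w ∈ Uh, ‖u - u_h‖ ≤ (C / c) * ‖u - w‖ := by
  have hTu : T u = vF := ext_inner_right ℝ fun v => by rw [hT, hu]
  have hT_le : ∀ x, ‖T x‖ ≤ C * ‖x‖ := fun x =>
    norm_le_of_real_inner_self_le (by positivity)
      ((hT x (T x)).trans_le ((le_abs_self _).trans (hbound x (T x))))
  have hmin : ∀ w ∈ Uh, ‖T u_h - vF‖ ≤ ‖T w - vF‖ := fun w hw =>
    T.norm_sub_le_of_real_inner_sub_eq_zero hmem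
      (fun δu hδu => by rw [inner_sub_left, hT, hdisc δu hδu, sub_self]) hw
  refine ⟨hmin, fun w hw => ?_⟩
  rw [div_mul_eq_mul_div, le_div_iff₀' hc]
  calc c * ‖u - u_h‖ ≤ ‖T (u - u_h)‖ := hinfsup _
    _ = ‖T u_h - vF‖ := by rw [map_sub, hTu, norm_sub_rev]
    _ ≤ ‖T w - vF‖ := hmin w hw
    _ = ‖T (u - w)‖ := by rw [map_sub, hTu, norm_sub_rev]
    _ ≤ C * ‖u - w‖ := hT_le _

/-- DPG with optimal test functions equals minimum residual minimization:
with trial-to-test operator T (⟪Tu, v⟫ = b(u,v)), Riesz representative vF of F,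
and discrete solution u_h of the DPG equations, u_h minimizes ‖Tw - vF‖ over
U_h and satisfies the quasi-optimal estimate ‖u - u_h‖ ≤ (C/c)‖u - w‖. -/
theorem stmt_17
    {U V : Type*} [NormedAddCommGroup U] [InnerProductSpace ℝ U] [CompleteSpace U]
    [NormedAddCommGroup V] [InnerProductSpace ℝ V] [CompleteSpace V]
    (b : U →ₗ[ℝ] V →ₗ[ℝ] ℝ) (C c : ℝ) (hC : 0 < C) (hc : 0 < c)
    (hbound : ∀ (u : U) (v : V), |b u v| ≤ C * ‖u‖ * ‖v‖)
    (T : U →ₗ[ℝ] V) (hT : ∀ (u : U) (v : V), ⟪T u, v⟫ = b u v)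
    (hinfsup : ∀ u : U, c * ‖u‖ ≤ ‖T u‖)
    (Uh : Submodule ℝ U) [FiniteDimensional ℝ Uh]
    (vF : V) (u : U) (hu : ∀ v : V, b u v = ⟪vF, v⟫)
    (u_h : U) (hmem : u_h ∈ Uh)
    (hdisc : ∀ δu ∈ Uh, b u_h (T δu) = ⟪vF, T δu⟫) :
    (∀ w ∈ Uh, ‖T u_h - vF‖ ≤ ‖T w - vF‖) ∧
      ∀ w ∈ Uh, ‖u - u_h‖ ≤ (C / c) * ‖u - w‖ :=
  stmt_17_general b C c hC hc hbound T hT hinfsup Uh vF u hu u_h hmem hdisc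
end
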